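/- Let (X, F_X) be a stratified space, and A, B ⊆ X with A a B-SND, i.e., A has an open neighborhood N admitting a stratified homotopy G : N × I → X with G(x,0) = x and G(x,1) ∈ B. Then Ocat(X, B, F_X) ≤ Whcat(X, A, F_X). -/

import Mathlib

open unitInterval

/-- A stratified map: continuous and compatible with the equivalence relations. -/
def IsStratMap {X Y : Type} [TopologicalSpace X] [TopologicalSpace Y]
    (rX : X → X → Prop) (rY : Y → Y → Prop) (f : X → Y) : Prop :=
  Continuous f ∧ ∀ x x' : X, rX x x' → rY (f x) (f x')

/-- A stratified homotopy: `X × I` carries the product relation with `I` trivially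
stratified, i.e. `(x,t) ∼ (x',t') ↔ x ∼ x'`. -/
def IsStratHomotopy {X Y : Type} [TopologicalSpace X] [TopologicalSpace Y]
    (rX : X → X → Prop) (rY : Y → Y → Prop) (H : X × I → Y) : Prop :=
  Continuous H ∧ ∀ (x x' : X) (t t' : I), rX x x' → rY (H (x, t)) (H (x', t'))

/-- Two maps are `S`-homotopic if a stratified homotopy joins them. -/
def SHomotopic {X Y : Type} [TopologicalSpace X] [TopologicalSpace Y]
    (rX : X → X → Prop) (rY : Y → Y → Prop) (f g : X → Y) : Prop :=
  ∃ H : X × I → Y, IsStratHomotopy rX rY H ∧ (∀ x, H (x, 0) = f x) ∧ (∀ x, H (x, 1) = g x)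

/-- A stratified weak equivalence: a stratified map with a two-sided inverse up to
stratified homotopy. -/
def IsStratWeakEquiv {X Y : Type} [TopologicalSpace X] [TopologicalSpace Y]
    (rX : X → X → Prop) (rY : Y → Y → Prop) (f : X → Y) : Prop :=
  IsStratMap rX rY f ∧ ∃ g : Y → X, IsStratMap rY rX g ∧
    SHomotopic rY rY (f ∘ g) id ∧ SHomotopic rX rX (g ∘ f) id

/-- The stratified homotopy lifting property with respect to all stratified spaces
(topological spaces with an equivalence relation with path-connected classes). -/
def HasSHLP {E B : Type} [TopologicalSpace E] [TopologicalSpace B]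
    (rE : E → E → Prop) (rB : B → B → Prop) (p : E → B) : Prop :=
  ∀ (Z : Type) (_ : TopologicalSpace Z) (rZ : Z → Z → Prop), Equivalence rZ →
    (∀ z : Z, IsPathConnected {z' | rZ z z'}) →
    ∀ h : Z → E, IsStratMap rZ rE h →
    ∀ H : Z × I → B, IsStratHomotopy rZ rB H →
    (∀ z, H (z, 0) = p (h z)) →
    ∃ H' : Z × I → E, IsStratHomotopy rZ rE H' ∧
      (∀ z t, p (H' (z, t)) = H (z, t)) ∧ (∀ z, H' (z, 0) = h z)

/-- A stratified fibration. -/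
def IsStratFibration {E B : Type} [TopologicalSpace E] [TopologicalSpace B]
    (rE : E → E → Prop) (rB : B → B → Prop) (p : E → B) : Prop :=
  IsStratMap rE rB p ∧ HasSHLP rE rB p

/-- The stratified path space `Y^I_S`: continuous paths contained in a single stratum,
with the compact-open topology. -/
abbrev SPath (Y : Type) [TopologicalSpace Y] (rY : Y → Y → Prop) : Type :=
  {ω : C(I, Y) // ∀ t t' : I, rY (ω t) (ω t')}

/-- The stratification of the path space: two paths are equivalent iff they lie in the
same stratum. -/
def SPathRel {Y : Type} [TopologicalSpace Y] (rY : Y → Y → Prop)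
    (ω ω' : SPath Y rY) : Prop :=
  rY (ω.1 0) (ω'.1 0)

/-- The stratification induced on a subset `U`: strata are the connected components of
the intersections of `U` with the strata of `X`. -/
def relInduced {X : Type} [TopologicalSpace X] (rX : X → X → Prop) (U : Set X)
    (x x' : U) : Prop :=
  (x' : X) ∈ connectedComponentIn {y | y ∈ U ∧ rX (x : X) y} (x : X)

/-- A subset `U` is `A`-categorical: there is a stratified homotopy (for the induced
stratification on `U`) from the inclusion of `U` to a map with values in `A`. -/
def ACat {X : Type} [TopologicalSpace X] (rX : X → X → Prop) (A U : Set X) : Prop :=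
  ∃ H : U × I → X, IsStratHomotopy (relInduced rX U) rX H ∧
    (∀ x : U, H (x, 0) = x) ∧ (∀ x : U, H (x, 1) ∈ A)

/-- `X` is covered by `n+1` open `A`-categorical sets. -/
def OcatLe {X : Type} [TopologicalSpace X] (rX : X → X → Prop) (A : Set X) (n : ℕ) : Prop :=
  ∃ U : Fin (n + 1) → Set X, (∀ i, IsOpen (U i)) ∧ (∀ x, ∃ i, x ∈ U i) ∧
    ∀ i, ACat rX A (U i)

/-- The open LS-category `Ocat(X, A, F_X)` of a stratified pair, as an extended natural
number (`⊤` if no finite categorical cover exists). -/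
noncomputable def Ocat {X : Type} [TopologicalSpace X] (rX : X → X → Prop) (A : Set X) : ℕ∞ :=
  sInf {c : ℕ∞ | ∃ n : ℕ, c = (n : ℕ∞) ∧ OcatLe rX A n}

/-- The `n`-th fat wedge of the pair `(X, A)`. -/
def FatWedge {X : Type} (A : Set X) (n : ℕ) : Set (Fin (n + 1) → X) :=
  {x | ∃ k, x k ∈ A}

/-- The product stratification on `X^{n+1}`. -/
def relPi {X : Type} (rX : X → X → Prop) {n : ℕ} (x y : Fin (n + 1) → X) : Prop :=
  ∀ i, rX (x i) (y i)

/-- The diagonal factors up to stratified homotopy through the `n`-th fat wedge. -/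
def WhcatLe {X : Type} [TopologicalSpace X] (rX : X → X → Prop) (A : Set X) (n : ℕ) : Prop :=
  ∃ r : X → (Fin (n + 1) → X), IsStratMap rX (relPi rX) r ∧
    (∀ x, r x ∈ FatWedge A n) ∧ SHomotopic rX (relPi rX) (fun x _ => x) r

/-- The Whitehead LS-category of a stratified pair. -/
noncomputable def Whcat {X : Type} [TopologicalSpace X] (rX : X → X → Prop) (A : Set X) : ℕ∞ :=
  sInf {c : ℕ∞ | ∃ n : ℕ, c = (n : ℕ∞) ∧ WhcatLe rX A n}

/-- The `n`-th Ganea space of the pair `(X, A)`: `(n+1)`-tuples of stratified paths with a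
common endpoint, one of which starts in `A`. -/
def GaneaSet {X : Type} [TopologicalSpace X] (rX : X → X → Prop) (A : Set X) (n : ℕ) :
    Set (Fin (n + 1) → SPath X rX) :=
  {α | (∀ i, (α i).1 1 = (α 0).1 1) ∧ ∃ k, (α k).1 0 ∈ A}

/-- The stratification on the Ganea space, induced by the product of path-space
stratifications. -/
def relGanea {X : Type} [TopologicalSpace X] (rX : X → X → Prop) (A : Set X) (n : ℕ)
    (α β : GaneaSet rX A n) : Prop :=
  ∀ i, rX ((α.1 i).1 0) ((β.1 i).1 0)

/-- The `n`-th Ganea fibration `G_n(X,A,F_X) → X`. -/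
def ganeaMap {X : Type} [TopologicalSpace X] (rX : X → X → Prop) (A : Set X) (n : ℕ)
    (α : GaneaSet rX A n) : X := (α.1 0).1 1

/-- The `n`-th Ganea fibration admits a stratified section. -/
def GcatLe {X : Type} [TopologicalSpace X] (rX : X → X → Prop) (A : Set X) (n : ℕ) : Prop :=
  ∃ s : X → GaneaSet rX A n, IsStratMap rX (relGanea rX A n) s ∧
    ∀ x, ganeaMap rX A n (s x) = x

/-- The Ganea LS-category of a stratified pair. -/
noncomputable def Gcat {X : Type} [TopologicalSpace X] (rX : X → X → Prop) (A : Set X) : ℕ∞ :=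
  sInf {c : ℕ∞ | ∃ n : ℕ, c = (n : ℕ∞) ∧ GcatLe rX A n}

/-
Cover `X` by the sets `Uᵢ = rᵢ⁻¹(N)`, where `r = (r₀, …, rₙ)` is the map into the fat wedge
homotopic to the diagonal; they cover `X` because every `r x` has a coordinate in `A ⊆ N`.
On `Uᵢ`, first follow the `i`-th coordinate of the homotopy from the inclusion to `rᵢ`, then the
deformation of `N` into `B`. Both stages keep each point inside one stratum, so the concatenation
is a stratified homotopy and `Uᵢ` is `B`-categorical.
-/

section

variable {X Y Z : Type} [TopologicalSpace X] [TopologicalSpace Y] [TopologicalSpace Z]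
  {rX : X → X → Prop} {rY : Y → Y → Prop} {rZ : Z → Z → Prop}

theorem relInduced.rel {U : Set X} {x x' : U} (h : relInduced rX U x x') : rX x x' :=
  (connectedComponentIn_subset _ _ h).2

theorem relInduced_refl (hX : ∀ x, rX x x) (U : Set X) (x : U) : relInduced rX U x x :=
  mem_connectedComponentIn ⟨x.2, hX _⟩

theorem isStratMap_subtype_val (U : Set X) :
    IsStratMap (relInduced rX U) rX ((↑) : U → X) :=
  ⟨continuous_subtype_val, fun _ _ h => h.rel⟩

namespace SHomotopic

variable {f g h : X → Y}

theorem comp_right (hfg : SHomotopic rX rY f g) {φ : Z → X} (hφ : IsStratMap rZ rX φ) :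
    SHomotopic rZ rY (f ∘ φ) (g ∘ φ) := by
  obtain ⟨H, ⟨hHc, hHs⟩, hH0, hH1⟩ := hfg
  obtain ⟨hφc, hφs⟩ := hφ
  exact ⟨fun p => H (φ p.1, p.2),
    ⟨by fun_prop, fun z z' t t' hz => hHs _ _ t t' (hφs _ _ hz)⟩,
    fun z => hH0 (φ z), fun z => hH1 (φ z)⟩

theorem apply {n : ℕ} {f g : X → Fin (n + 1) → Y} (hfg : SHomotopic rX (relPi rY) f g)
    (i : Fin (n + 1)) : SHomotopic rX rY (f · i) (g · i) := by
  obtain ⟨H, ⟨hHc, hHs⟩, hH0, hH1⟩ := hfg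
  exact ⟨fun p => H p i, ⟨by fun_prop, fun x x' t t' hx => hHs x x' t t' hx i⟩,
    fun x => congrFun (hH0 x) i, fun x => congrFun (hH1 x) i⟩

theorem trans (hX : ∀ x, rX x x) (hY : Equivalence rY) (hfg : SHomotopic rX rY f g)
    (hgh : SHomotopic rX rY g h) : SHomotopic rX rY f h := by
  obtain ⟨F, ⟨hFc, hFs⟩, hF0, hF1⟩ := hfg
  obtain ⟨G, ⟨hGc, hGs⟩, hG0, hG1⟩ := hgh
  have hf : Continuous f := by
    simpa only [Function.comp_def, hF0] using hFc.comp (Continuous.prodMk_left 0)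
  have hg : Continuous g := by
    simpa only [Function.comp_def, hF1] using hFc.comp (Continuous.prodMk_left 1)
  have hh : Continuous h := by
    simpa only [Function.comp_def, hG1] using hGc.comp (Continuous.prodMk_left 1)
  let F' : ContinuousMap.Homotopy ⟨f, hf⟩ ⟨g, hg⟩ :=
    ⟨⟨fun p => F (p.2, p.1), by fun_prop⟩, fun x => hF0 x, fun x => hF1 x⟩
  let G' : ContinuousMap.Homotopy ⟨g, hg⟩ ⟨h, hh⟩ :=
    ⟨⟨fun p => G (p.2, p.1), by fun_prop⟩, fun x => hG0 x, fun x => hG1 x⟩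
  let K := F'.trans G'
  have hK : ∀ x t, rY (K (t, x)) (g x) := by
    intro x t
    rw [ContinuousMap.Homotopy.trans_apply]
    split_ifs
    · rw [← hF1 x]; exact hFs x x _ 1 (hX x)
    · rw [← hG0 x]; exact hGs x x _ 0 (hX x)
  refine ⟨fun p => K (p.2, p.1), ⟨by fun_prop, fun x x' t t' hx => ?_⟩,
    fun x => K.apply_zero x, fun x => K.apply_one x⟩
  have hgx : rY (g x) (g x') := by rw [← hF1 x, ← hF1 x']; exact hFs x x' 1 1 hx
  exact hY.trans (hK x t) (hY.trans hgx (hY.symm (hK x' t')))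

end SHomotopic

theorem ACat.exists_sHomotopic {A N : Set X} (hX : Equivalence rX) (hN : ACat rX A N)
    {f : Z → X} (hf : IsStratMap rZ rX f) (hfN : ∀ z, f z ∈ N) :
    ∃ g : Z → X, (∀ z, g z ∈ A) ∧ SHomotopic rZ rX f g := by
  obtain ⟨G, ⟨hGc, hGs⟩, hG0, hG1⟩ := hN
  obtain ⟨hfc, hfs⟩ := hf
  have hG : ∀ y t, rX (G (y, t)) y := fun y t => by
    simpa only [hG0] using hGs y y t 0 (relInduced_refl hX.refl N y)
  refine ⟨fun z => G (⟨f z, hfN z⟩, 1), fun z => hG1 _,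
    fun p => G (⟨f p.1, hfN p.1⟩, p.2), ⟨by fun_prop, fun z z' t t' hz => ?_⟩,
    fun z => hG0 _, fun _ => rfl⟩
  exact hX.trans (hG _ t) (hX.trans (hfs z z' hz) (hX.symm (hG _ t')))

theorem ACat.of_sHomotopic {A U : Set X} {g : U → X} (hg : ∀ x, g x ∈ A)
    (h : SHomotopic (relInduced rX U) rX (↑) g) : ACat rX A U := by
  obtain ⟨H, hH, hH0, hH1⟩ := h
  exact ⟨H, hH, hH0, fun x => hH1 x ▸ hg x⟩

theorem WhcatLe.ocatLe {A B N : Set X} {n : ℕ} (hX : Equivalence rX) (hNopen : IsOpen N)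
    (hAN : A ⊆ N) (hSND : ACat rX B N) (hW : WhcatLe rX A n) : OcatLe rX B n := by
  obtain ⟨r, ⟨hrc, hrs⟩, hrA, hrΔ⟩ := hW
  refine ⟨fun i => (r · i) ⁻¹' N, fun i => hNopen.preimage (by fun_prop),
    fun x => (hrA x).imp fun _ hk => hAN hk, fun i => ?_⟩
  let U := (r · i) ⁻¹' N
  have hri : IsStratMap (relInduced rX U) rX (fun x : U => r x i) :=
    ⟨by fun_prop, fun x x' hx => hrs x x' hx.rel i⟩
  obtain ⟨g, hgB, hrg⟩ := hSND.exists_sHomotopic hX hri fun x => x.2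
  exact ACat.of_sHomotopic hgB <|
    ((hrΔ.apply i).comp_right (isStratMap_subtype_val U)).trans
      (relInduced_refl hX.refl U) hX hrg

theorem ocat_le_whcat_of_forall {A B : Set X}
    (h : ∀ n : ℕ, WhcatLe rX A n → OcatLe rX B n) : Ocat rX B ≤ Whcat rX A :=
  sInf_le_sInf fun _ ⟨n, hc, hn⟩ => ⟨n, hc, h n hn⟩

end

theorem ocat_le_whcat_of_SND_general {X : Type} [TopologicalSpace X]
    (rX : X → X → Prop) (hX : Equivalence rX)
    (A B : Set X)
    (N : Set X) (hNopen : IsOpen N) (hAN : A ⊆ N) (hSND : ACat rX B N) :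
    (∀ n : ℕ, WhcatLe rX A n → OcatLe rX B n) ∧ Ocat rX B ≤ Whcat rX A :=
  have h : ∀ n : ℕ, WhcatLe rX A n → OcatLe rX B n := fun _ hW =>
    hW.ocatLe hX hNopen hAN hSND
  ⟨h, ocat_le_whcat_of_forall h⟩

/-- if `A` is a `B`-SND (it has an open neighborhood `N` with a stratified
deformation of `N` into `B`), then `Ocat(X,B,F_X) ≤ Whcat(X,A,F_X)`. -/
theorem ocat_le_whcat_of_SND {X : Type} [TopologicalSpace X]
    (rX : X → X → Prop) (hX : Equivalence rX)
    (hpc : ∀ x : X, IsPathConnected {x' | rX x x'}) (A B : Set X)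
    (N : Set X) (hNopen : IsOpen N) (hAN : A ⊆ N) (hSND : ACat rX B N) :
    (∀ n : ℕ, WhcatLe rX A n → OcatLe rX B n) ∧ Ocat rX B ≤ Whcat rX A :=
  ocat_le_whcat_of_SND_general rX hX A B N hNopen hAN hSND
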